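/- Combined PAA-window lower bound: let X, Y be sequences of length n = p·ω with disjoint windows x_k, y_k of length ω = f·m, and let T be the PAA transform to f dimensions. If D(X, Y) ≤ ε, then there exists k with D(T(x_k), T(y_k)) ≤ ε/(√m·√p). -/
import Mathlib


open Finset

noncomputable def lsSlope (n : ℕ) (X : Fin n → ℝ) : ℝ :=
  ((n : ℝ) * ∑ k, ((k.1 : ℝ) + 1) * X k -
      (∑ k : Fin n, ((k.1 : ℝ) + 1)) * ∑ k, X k) /
    ((n : ℝ) * ∑ k : Fin n, ((k.1 : ℝ) + 1) ^ 2 -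
      (∑ k : Fin n, ((k.1 : ℝ) + 1)) ^ 2)

noncomputable def lsIntercept (n : ℕ) (X : Fin n → ℝ) : ℝ :=
  (∑ k, X k) / n - lsSlope n X * (∑ k : Fin n, ((k.1 : ℝ) + 1)) / n

noncomputable def LD (n : ℕ) (X : Fin n → ℝ) : Fin n → ℝ :=
  fun k => X k - (lsSlope n X * ((k.1 : ℝ) + 1) + lsIntercept n X)

noncomputable def eucDist (n : ℕ) (X Y : Fin n → ℝ) : ℝ :=
  Real.sqrt (∑ k, (X k - Y k) ^ 2)

def window (p w : ℕ) (X : Fin (p * w) → ℝ) (k : Fin p) : Fin w → ℝ :=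
  fun j => X ⟨k.1 * w + j.1, by
    calc k.1 * w + j.1 < k.1 * w + w := Nat.add_lt_add_left j.2 _
    _ = (k.1 + 1) * w := by ring
    _ ≤ p * w := Nat.mul_le_mul_right w k.2⟩

noncomputable def PAA (f m : ℕ) (x : Fin (f * m) → ℝ) : Fin f → ℝ :=
  fun i => (1 / (m : ℝ)) * ∑ j : Fin m, x ⟨i.1 * m + j.1, by
    calc i.1 * m + j.1 < i.1 * m + m := Nat.add_lt_add_left j.2 _
    _ = (i.1 + 1) * m := by ring
    _ ≤ f * m := Nat.mul_le_mul_right m i.2⟩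

lemma sum_block (p w : ℕ) (g : Fin (p * w) → ℝ) :
    ∑ i, g i = ∑ k : Fin p, ∑ j : Fin w, g ⟨k.1 * w + j.1, by
      calc k.1 * w + j.1 < k.1 * w + w := Nat.add_lt_add_left j.2 _
      _ = (k.1 + 1) * w := by ring
      _ ≤ p * w := Nat.mul_le_mul_right w k.2⟩ := by
  refine Eq.symm ?_
  rw [← Fintype.sum_prod_type']
  refine Fintype.sum_equiv finProdFinEquiv _ _ ?_
  rintro ⟨k, j⟩
  congr 1
  simp [finProdFinEquiv, Fin.ext_iff]
  ring

lemma paa_contract (f m : ℕ) (hm : 1 ≤ m) (v : Fin (f * m) → ℝ) :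
    (m : ℝ) * ∑ i : Fin f, (PAA f m v i) ^ 2 ≤ ∑ j, v j ^ 2 := by
  have hm0 : (0 : ℝ) < m := by exact_mod_cast hm
  rw [sum_block f m (fun j => v j ^ 2), Finset.mul_sum]
  refine Finset.sum_le_sum fun i _ => ?_
  have hcs : (∑ j : Fin m, v ⟨i.1 * m + j.1, by
      calc i.1 * m + j.1 < i.1 * m + m := Nat.add_lt_add_left j.2 _
      _ = (i.1 + 1) * m := by ring
      _ ≤ f * m := Nat.mul_le_mul_right m i.2⟩) ^ 2 ≤
      (m : ℝ) * ∑ j : Fin m, v ⟨i.1 * m + j.1, by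
      calc i.1 * m + j.1 < i.1 * m + m := Nat.add_lt_add_left j.2 _
      _ = (i.1 + 1) * m := by ring
      _ ≤ f * m := Nat.mul_le_mul_right m i.2⟩ ^ 2 := by
    simpa using sq_sum_le_card_mul_sum_sq (s := (univ : Finset (Fin m)))
  rw [PAA, mul_pow, div_pow, one_pow]
  calc (m : ℝ) * (1 / (m : ℝ) ^ 2 * _ ^ 2) ≤
      (m : ℝ) * (1 / (m : ℝ) ^ 2 * ((m : ℝ) * ∑ j : Fin m, v ⟨i.1 * m + j.1, by
        calc i.1 * m + j.1 < i.1 * m + m := Nat.add_lt_add_left j.2 _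
        _ = (i.1 + 1) * m := by ring
        _ ≤ f * m := Nat.mul_le_mul_right m i.2⟩ ^ 2)) := by
        have h1 : (0:ℝ) ≤ (m:ℝ) := hm0.le
        gcongr
    _ = _ := by field_simp

theorem stmt19 (p f m : ℕ) (hp : 1 ≤ p) (hf : 1 ≤ f) (hm : 1 ≤ m)
    (X Y : Fin (p * (f * m)) → ℝ) (eps : ℝ)
    (h : eucDist (p * (f * m)) X Y ≤ eps) :
    ∃ k : Fin p,
      eucDist f (PAA f m (window p (f * m) X k)) (PAA f m (window p (f * m) Y k)) ≤
        eps / (Real.sqrt m * Real.sqrt p) := by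
  have heps0 : 0 ≤ eps := le_trans (Real.sqrt_nonneg _) h
  have hm0 : (0 : ℝ) < m := by exact_mod_cast hm
  have hp0 : (0 : ℝ) < p := by exact_mod_cast hp
  set S : Fin p → ℝ :=
    fun k => ∑ j : Fin (f * m), (window p (f * m) X k j - window p (f * m) Y k j) ^ 2
    with hS
  have htotal : ∑ i, (X i - Y i) ^ 2 ≤ eps ^ 2 := by
    have h1 : (eucDist (p * (f * m)) X Y) ^ 2 ≤ eps ^ 2 :=
      pow_le_pow_left₀ (Real.sqrt_nonneg _) h 2
    rwa [eucDist, Real.sq_sqrt (Finset.sum_nonneg fun i _ => sq_nonneg _)] at h1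
  have hdecomp : ∑ i, (X i - Y i) ^ 2 = ∑ k : Fin p, S k := by
    simpa [hS, window] using sum_block p (f * m) (fun i => (X i - Y i) ^ 2)
  haveI : Nonempty (Fin p) := ⟨⟨0, hp⟩⟩
  obtain ⟨k, -, hk⟩ := Finset.exists_min_image Finset.univ S Finset.univ_nonempty
  refine ⟨k, ?_⟩
  have hmin : (p : ℝ) * S k ≤ eps ^ 2 := by
    calc (p : ℝ) * S k = ∑ _k' : Fin p, S k := by
          simp [Finset.sum_const, Finset.card_univ, mul_comm]
      _ ≤ ∑ k', S k' := Finset.sum_le_sum fun k' _ => hk k' (Finset.mem_univ _)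
      _ = ∑ i, (X i - Y i) ^ 2 := hdecomp.symm
      _ ≤ eps ^ 2 := htotal
  set v : Fin (f * m) → ℝ :=
    fun j => window p (f * m) X k j - window p (f * m) Y k j with hv
  have hpaaeq : ∀ i : Fin f,
      PAA f m (window p (f * m) X k) i - PAA f m (window p (f * m) Y k) i = PAA f m v i := by
    intro i
    simp [PAA, hv, Finset.sum_sub_distrib, mul_sub]
  have hcontract := paa_contract f m hm v
  have hdSq : ∑ i : Fin f,
      (PAA f m (window p (f * m) X k) i - PAA f m (window p (f * m) Y k) i) ^ 2 =
      ∑ i : Fin f, (PAA f m v i) ^ 2 := by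
    exact Finset.sum_congr rfl fun i _ => by rw [hpaaeq i]
  have hkey : (m : ℝ) * (p : ℝ) * ∑ i : Fin f, (PAA f m v i) ^ 2 ≤ eps ^ 2 := by
    calc (m : ℝ) * (p : ℝ) * ∑ i : Fin f, (PAA f m v i) ^ 2
        = (p : ℝ) * ((m : ℝ) * ∑ i : Fin f, (PAA f m v i) ^ 2) := by ring
      _ ≤ (p : ℝ) * S k := by
          apply mul_le_mul_of_nonneg_left _ hp0.le
          exact hcontract
      _ ≤ eps ^ 2 := hmin
  have hd0 : 0 ≤ ∑ i : Fin f, (PAA f m v i) ^ 2 :=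
    Finset.sum_nonneg fun i _ => sq_nonneg _
  rw [eucDist, hdSq]
  have hle : ∑ i : Fin f, (PAA f m v i) ^ 2 ≤ eps ^ 2 / ((m : ℝ) * p) := by
    rw [le_div_iff₀ (by positivity)]
    calc (∑ i : Fin f, (PAA f m v i) ^ 2) * ((m : ℝ) * p)
        = (m : ℝ) * (p : ℝ) * ∑ i : Fin f, (PAA f m v i) ^ 2 := by ring
      _ ≤ eps ^ 2 := hkey
  calc Real.sqrt (∑ i : Fin f, (PAA f m v i) ^ 2)
      ≤ Real.sqrt (eps ^ 2 / ((m : ℝ) * p)) := Real.sqrt_le_sqrt hle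
    _ = eps / (Real.sqrt m * Real.sqrt p) := by
        rw [Real.sqrt_div (sq_nonneg eps), Real.sqrt_sq heps0, Real.sqrt_mul hm0.le]
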